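/- For every strongly binary tree T and every cut y of T, K̃(T,y) ≤ s(T); moreover, the cut y₁ that assigns 1 to every leaf and 0 to every internal node (inducing the all-singletons clustering) satisfies K̃(T,y₁) = s(T). Hence the maximum of K̃(T,·) over all cuts of T equals s(T). -/

import Mathlib

/-! Send each node `p` counted by `K̃(T,y)` to a cherry below it. If `y p = 0`, an internal
child of `p` would lie in `T'_y`, so `p` is itself a cherry; if `y p = 1`, every descendant of `p`
is `1` with parent `1`, so no strict descendant of `p` lies in `T'_y`. Hence no counted node lies
strictly below another, and the map is injective. For the cut `y₁`, `T'_{y₁}` is the set of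
internal nodes, whose childless members are exactly the cherries. -/

/-- A strongly binary tree: either a single leaf, or an internal node with an
ordered pair of strongly binary subtrees. -/
inductive SBTree where
  | leaf : SBTree
  | node : SBTree → SBTree → SBTree
deriving DecidableEq

/-- The subtree of `T` sitting at the position described by the path `p`
(`false` = go to the left child, `true` = go to the right child), if it exists.
Positions `p` with `subtreeAt T p ≠ none` are the nodes of `T`; the root is `[]`,
and the parent of a nonroot node `p` is `p.dropLast`. -/
def SBTree.subtreeAt : SBTree → List Bool → Option SBTree
  | t, [] => some t
  | .leaf, _ :: _ => none
  | .node l r, b :: p => (if b then r else l).subtreeAt p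

/-- `p` is a node of `T`. -/
def SBTree.IsNodePos (T : SBTree) (p : List Bool) : Prop := (T.subtreeAt p).isSome

/-- `p` is a leaf of `T`. -/
def SBTree.IsLeafPos (T : SBTree) (p : List Bool) : Prop := T.subtreeAt p = some .leaf

/-- `p` is an internal node of `T`. -/
def SBTree.IsInternalPos (T : SBTree) (p : List Bool) : Prop :=
  ∃ l r, T.subtreeAt p = some (.node l r)

/-- A cut of `T`: an assignment `y` of `{0,1}` (here `Bool`) to the nodes of `T`
(normalized to `false` outside the tree) such that every leaf is assigned `1` and,
whenever an internal node is assigned `1`, both of its children are assigned `1`. -/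
def SBTree.IsCut (T : SBTree) (y : List Bool → Bool) : Prop :=
  (∀ p, ¬ T.IsNodePos p → y p = false) ∧
  (∀ p, T.IsLeafPos p → y p = true) ∧
  (∀ p, T.IsInternalPos p → y p = true →
    y (p ++ [false]) = true ∧ y (p ++ [true]) = true)

/-- The lower boundary `LB(y)` of a cut: the nodes `v` with `y v = 1` such that `v`
is the root or `y (parent v) = 0`; its cardinality is the number of clusters
induced by the cut. -/
def SBTree.LB (T : SBTree) (y : List Bool → Bool) : Set (List Bool) :=
  {p | T.IsNodePos p ∧ y p = true ∧ (p = [] ∨ y p.dropLast = false)}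

/-- The set `T'_y`: internal nodes `v` of `T` such that either `y v = 0`, or
`y v = 1` and (`v` is the root or `y (parent v) = 0`). -/
def SBTree.Tset (T : SBTree) (y : List Bool → Bool) : Set (List Bool) :=
  {p | T.IsInternalPos p ∧
    (y p = false ∨ (y p = true ∧ (p = [] ∨ y p.dropLast = false)))}

/-- `K̃(T,y)`: the number of nodes of `T'_y` having no child in `T'_y`. -/
noncomputable def SBTree.Ktilde (T : SBTree) (y : List Bool → Bool) : ℕ :=
  Set.ncard {p | p ∈ T.Tset y ∧ (p ++ [false]) ∉ T.Tset y ∧ (p ++ [true]) ∉ T.Tset y}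

/-- The number of cherries `s(T)`: internal nodes both of whose children are leaves
(equivalently, the number of pairs of sibling leaves `|L_s(T)|`). -/
def SBTree.cherries : SBTree → ℕ
  | .leaf => 0
  | .node .leaf .leaf => 1
  | .node l r => l.cherries + r.cherries

namespace SBTree

theorem subtreeAt_append (T : SBTree) (p q : List Bool) :
    T.subtreeAt (p ++ q) = (T.subtreeAt p).bind (·.subtreeAt q) := by
  induction p generalizing T with
  | nil => simp [subtreeAt]
  | cons b p ih =>
    cases T with
    | leaf => simp [subtreeAt]
    | node l r => exact ih _

theorem subtreeAt_concat_of_eq_node {T l r : SBTree} {p : List Bool}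
    (h : T.subtreeAt p = some (.node l r)) (b : Bool) :
    T.subtreeAt (p ++ [b]) = some (if b then r else l) := by
  simp [subtreeAt_append, h, subtreeAt]

theorem IsNodePos.of_append {T : SBTree} {p q : List Bool} (h : T.IsNodePos (p ++ q)) :
    T.IsNodePos p := by
  rw [IsNodePos, subtreeAt_append] at h
  exact Option.isSome_of_isSome_bind h

theorem IsInternalPos.isNodePos {T : SBTree} {p : List Bool} (h : T.IsInternalPos p) :
    T.IsNodePos p := by
  obtain ⟨l, r, h⟩ := h
  simp [IsNodePos, h]

theorem isInternalPos_of_isNodePos_append_cons {T : SBTree} {p q : List Bool} {b : Bool}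
    (h : T.IsNodePos (p ++ b :: q)) : T.IsInternalPos p := by
  rw [IsNodePos, subtreeAt_append] at h
  match hp : T.subtreeAt p, h with
  | some (.node l r), _ => exact ⟨l, r, hp⟩
  | some .leaf, h => simp [subtreeAt] at h
  | none, h => simp at h

def IsCherryPos (T : SBTree) (p : List Bool) : Prop := T.subtreeAt p = some (.node .leaf .leaf)

theorem isCherryPos_iff {T : SBTree} {p : List Bool} :
    T.IsCherryPos p ↔ T.IsInternalPos p ∧ ∀ b, ¬ T.IsInternalPos (p ++ [b]) := by
  constructor
  · intro h
    refine ⟨⟨_, _, h⟩, fun b ⟨_, _, hb⟩ => ?_⟩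
    rw [subtreeAt_concat_of_eq_node h] at hb
    cases b <;> simp at hb
  · rintro ⟨⟨l, r, h⟩, hchild⟩
    have hleaf : ∀ b : Bool, (if b then r else l) = .leaf := fun b => by
      match hb : (if b then r else l) with
      | .leaf => rfl
      | .node _ _ => exact (hchild b ⟨_, _, by rw [subtreeAt_concat_of_eq_node h, hb]⟩).elim
    simpa [IsCherryPos, h] using And.intro (hleaf false) (hleaf true)

theorem not_isInternalPos_append_of_isCherryPos {T : SBTree} {p r : List Bool}
    (hp : T.IsCherryPos p) (hr : r ≠ []) : ¬ T.IsInternalPos (p ++ r) := by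
  rintro ⟨_, _, h⟩
  rw [subtreeAt_append, hp] at h
  rcases r with _ | ⟨_ | _, _ | _⟩ <;> simp_all [subtreeAt]

theorem exists_isCherryPos_of_ne_leaf (t : SBTree) (ht : t ≠ .leaf) : ∃ q, t.IsCherryPos q := by
  induction t with
  | leaf => exact (ht rfl).elim
  | node l r ihl ihr =>
    match l, r, ihl, ihr with
    | .leaf, .leaf, _, _ => exact ⟨[], rfl⟩
    | .node _ _, _, ihl, _ =>
      obtain ⟨q, hq⟩ := ihl (by simp)
      exact ⟨false :: q, hq⟩
    | .leaf, .node _ _, _, ihr =>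
      obtain ⟨q, hq⟩ := ihr (by simp)
      exact ⟨true :: q, hq⟩

theorem IsInternalPos.exists_isCherryPos {T : SBTree} {p : List Bool} (hp : T.IsInternalPos p) :
    ∃ c, p <+: c ∧ T.IsCherryPos c := by
  obtain ⟨l, r, h⟩ := hp
  obtain ⟨q, hq⟩ := exists_isCherryPos_of_ne_leaf (.node l r) (by simp)
  exact ⟨p ++ q, List.prefix_append p q, by rw [IsCherryPos, subtreeAt_append, h]; exact hq⟩

def cherryFinset : SBTree → Finset (List Bool)
  | .leaf => ∅
  | .node .leaf .leaf => {[]}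
  | .node l r => l.cherryFinset.image (List.cons false) ∪ r.cherryFinset.image (List.cons true)

theorem mem_cherryFinset {T : SBTree} {p : List Bool} :
    p ∈ T.cherryFinset ↔ T.IsCherryPos p := by
  fun_induction cherryFinset T generalizing p with
  | case1 => cases p <;> simp [IsCherryPos, subtreeAt]
  | case2 => rcases p with _ | ⟨_, _ | _⟩ <;> simp [IsCherryPos, subtreeAt]
  | case3 l r hlr ihl ihr =>
    rcases p with _ | ⟨_ | _, p⟩
    · simpa [IsCherryPos, subtreeAt] using hlr
    · simpa [IsCherryPos, subtreeAt] using ihl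
    · simpa [IsCherryPos, subtreeAt] using ihr

theorem card_cherryFinset (T : SBTree) : T.cherryFinset.card = T.cherries := by
  fun_induction cherryFinset T with
  | case1 => rfl
  | case2 => rfl
  | case3 l r hlr ihl ihr =>
    have hdisj : Disjoint (l.cherryFinset.image (List.cons false))
        (r.cherryFinset.image (List.cons true)) := by
      simp [Finset.disjoint_left]
    rw [Finset.card_union_of_disjoint hdisj, Finset.card_image_of_injective _ List.cons_injective,
      Finset.card_image_of_injective _ List.cons_injective, ihl, ihr, cherries]
    exact hlr

theorem coe_cherryFinset (T : SBTree) :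
    (T.cherryFinset : Set (List Bool)) = {p | T.IsCherryPos p} :=
  Set.ext fun _ => mem_cherryFinset

theorem ncard_setOf_isCherryPos (T : SBTree) : {p | T.IsCherryPos p}.ncard = T.cherries := by
  rw [← coe_cherryFinset, Set.ncard_coe_finset, card_cherryFinset]

theorem finite_setOf_isCherryPos (T : SBTree) : {p | T.IsCherryPos p}.Finite :=
  T.coe_cherryFinset ▸ T.cherryFinset.finite_toSet

theorem IsCut.apply_append_eq_true {T : SBTree} {y : List Bool → Bool} (hy : T.IsCut y)
    {p q : List Bool} (hp : y p = true) (hq : T.IsNodePos (p ++ q)) : y (p ++ q) = true := by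
  induction q generalizing p with
  | nil => simpa using hp
  | cons b q ih =>
    have hchild := hy.2.2 p (isInternalPos_of_isNodePos_append_cons hq) hp
    rw [← List.singleton_append, ← List.append_assoc] at hq ⊢
    exact ih (by cases b <;> simp [hchild]) hq

def KtildeSet (T : SBTree) (y : List Bool → Bool) : Set (List Bool) :=
  {p | p ∈ T.Tset y ∧ (p ++ [false]) ∉ T.Tset y ∧ (p ++ [true]) ∉ T.Tset y}

theorem Ktilde_eq_ncard_KtildeSet (T : SBTree) (y : List Bool → Bool) :
    T.Ktilde y = (T.KtildeSet y).ncard := rfl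

theorem concat_mem_Tset {T : SBTree} {y : List Bool → Bool} {p : List Bool} {b : Bool}
    (hp : y p = false) (hb : T.IsInternalPos (p ++ [b])) : p ++ [b] ∈ T.Tset y := by
  refine ⟨hb, ?_⟩
  cases y (p ++ [b]) <;> simp [hp]

theorem isCherryPos_of_mem_KtildeSet {T : SBTree} {y : List Bool → Bool} {p : List Bool}
    (hp : p ∈ T.KtildeSet y) (hyp : y p = false) : T.IsCherryPos p := by
  obtain ⟨⟨hint, -⟩, hleft, hright⟩ := hp
  refine isCherryPos_iff.2 ⟨hint, fun b hb => ?_⟩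
  cases b
  · exact hleft (concat_mem_Tset hyp hb)
  · exact hright (concat_mem_Tset hyp hb)

theorem IsCut.append_not_mem_Tset {T : SBTree} {y : List Bool → Bool} (hy : T.IsCut y)
    {p r : List Bool} (hp : y p = true) (hr : r ≠ []) : p ++ r ∉ T.Tset y := by
  rintro ⟨hint, hzero | ⟨-, hroot | hparent⟩⟩
  · simp [hy.apply_append_eq_true hp hint.isNodePos] at hzero
  · exact hr (List.append_eq_nil_iff.1 hroot).2
  · have hnode : T.IsNodePos (p ++ r.dropLast) := by
      refine IsNodePos.of_append (q := [r.getLast hr]) ?_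
      rw [List.append_assoc, List.dropLast_append_getLast hr]
      exact hint.isNodePos
    rw [List.dropLast_append_of_ne_nil hr, hy.apply_append_eq_true hp hnode] at hparent
    exact Bool.noConfusion hparent

theorem IsCut.eq_of_prefix {T : SBTree} {y : List Bool → Bool} (hy : T.IsCut y)
    {p q : List Bool} (hp : p ∈ T.KtildeSet y) (hq : q ∈ T.Tset y) (hpq : p <+: q) : p = q := by
  obtain ⟨r, rfl⟩ := hpq
  rcases eq_or_ne r [] with rfl | hr
  · simp
  cases hyp : y p
  · exact (not_isInternalPos_append_of_isCherryPos (isCherryPos_of_mem_KtildeSet hp hyp) hr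
      hq.1).elim
  · exact (hy.append_not_mem_Tset hyp hr hq).elim

theorem Ktilde_le_cherries {T : SBTree} {y : List Bool → Bool} (hy : T.IsCut y) :
    T.Ktilde y ≤ T.cherries := by
  have hcherry : ∀ p ∈ T.KtildeSet y, ∃ c, p <+: c ∧ T.IsCherryPos c :=
    fun p hp => hp.1.1.exists_isCherryPos
  choose! f hpf hf using hcherry
  rw [Ktilde_eq_ncard_KtildeSet, ← ncard_setOf_isCherryPos]
  refine Set.ncard_le_ncard_of_injOn f hf (fun p hp q hq hpq => ?_) T.finite_setOf_isCherryPos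
  rcases List.prefix_or_prefix_of_prefix (hpf p hp) (hpq ▸ hpf q hq) with h | h
  · exact hy.eq_of_prefix hp hq.1 h
  · exact (hy.eq_of_prefix hq hp.1 h).symm

def singletonsCut (T : SBTree) (p : List Bool) : Bool := decide (T.subtreeAt p = some .leaf)

theorem isCut_singletonsCut (T : SBTree) : T.IsCut T.singletonsCut := by
  refine ⟨fun p hp => ?_, fun p hp => ?_, fun p ⟨l, r, h⟩ hp => ?_⟩
  · simp [singletonsCut, Option.not_isSome_iff_eq_none.1 hp]
  · simpa [singletonsCut, IsLeafPos] using hp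
  · simp [singletonsCut, h] at hp

theorem Tset_singletonsCut (T : SBTree) : T.Tset T.singletonsCut = {p | T.IsInternalPos p} := by
  ext p
  refine ⟨And.left, fun hp => ⟨hp, Or.inl ?_⟩⟩
  obtain ⟨l, r, h⟩ := hp
  simp [singletonsCut, h]

theorem Ktilde_singletonsCut (T : SBTree) : T.Ktilde T.singletonsCut = T.cherries := by
  rw [Ktilde_eq_ncard_KtildeSet, ← ncard_setOf_isCherryPos, KtildeSet, Tset_singletonsCut]
  simp [isCherryPos_iff]

end SBTree

/-- For every strongly binary tree `T` and cut `y`, `K̃(T,y) ≤ s(T)`; moreover, the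
cut assigning `1` to every leaf and `0` to every internal node (inducing the
all-singletons clustering) is a cut achieving `K̃ = s(T)`. Hence the maximum of
`K̃(T,·)` over all cuts of `T` equals `s(T)`. -/
theorem Ktilde_le_cherries_and_max :
    (∀ (T : SBTree) (y : List Bool → Bool), T.IsCut y → T.Ktilde y ≤ T.cherries) ∧
    (∀ T : SBTree,
      T.IsCut (fun p => decide (T.subtreeAt p = some SBTree.leaf)) ∧
      T.Ktilde (fun p => decide (T.subtreeAt p = some SBTree.leaf)) = T.cherries) ∧
    (∀ T : SBTree,
      IsGreatest {k : ℕ | ∃ y, T.IsCut y ∧ T.Ktilde y = k} T.cherries) := by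
  exact ⟨fun T y hy => SBTree.Ktilde_le_cherries hy,
    fun T => ⟨T.isCut_singletonsCut, T.Ktilde_singletonsCut⟩,
    fun T => ⟨⟨_, T.isCut_singletonsCut, T.Ktilde_singletonsCut⟩,
      fun _ ⟨_, hy, hk⟩ => hk ▸ SBTree.Ktilde_le_cherries hy⟩⟩
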